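/- arXiv:1310.2506 — 2 statements merged into one kernel-verified Lean document; each statement's English description precedes it below -/
import Mathlib

section
/- Let y = (y_1,…,y_n) ∈ ℝ^n be an isotropic random vector with unconditional distribution and finite fourth moments, such that E[y_j² y_k²] = a_{2,2} for all j ≠ k and E[y_j^4] = 3a_{2,2} + κ_4 for all j. Then for every n×n complex symmetric matrix A, Var((A y, y)) = (a_{2,2} − n^{-2}) |Tr A|² + 2 a_{2,2} Tr(A A^*) + κ_4 Σ_{j=1}^n |A_{jj}|², where (Ay,y) = Σ_{j,k} A_{jk} y_j y_k and Var(X) := E[|X − E X|²]. -/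
/-!
Expand `|(Ay, y)|² = ∑ A_{jk} conj(A_{lm}) y_j y_k y_l y_m`. Flipping the sign of one coordinate
preserves the law of `y`, so a fourth moment `E[y_j y_k y_l y_m]` in which some index occurs an odd
number of times vanishes; only the pairings `{j=k, l=m}`, `{j=l, k=m}`, `{j=m, k=l}` survive, and
they contribute `a₂₂ |Tr A|²`, `a₂₂ Tr(AA*)` and, because `A` is symmetric, again `a₂₂ Tr(AA*)`,
with the correction `κ₄ ∑ |A_{jj}|²` on the diagonal `j=k=l=m`. Isotropy gives
`E(Ay, y) = Tr A / n`, and `Var X = E|X|² - |EX|²`.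
-/

open MeasureTheory ProbabilityTheory Filter Topology Matrix Asymptotics
open scoped BigOperators ENNReal NNReal Pointwise

noncomputable section

/-- The (bilinear) quadratic form `(A y, y) = ∑_{j,k} A_{jk} y_j y_k` of a complex
matrix evaluated on a real vector. -/
def quadForm {n : ℕ} (A : Matrix (Fin n) (Fin n) ℂ) (y : Fin n → ℝ) : ℂ :=
  ∑ j, ∑ k, A j k * (y j : ℂ) * (y k : ℂ)

/-- Operator (ℓ² → ℓ²) norm of a complex matrix. -/
def opNorm {n : ℕ} (A : Matrix (Fin n) (Fin n) ℂ) : ℝ :=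
  ‖Matrix.toEuclideanCLM (𝕜 := ℂ) A‖

/-- A random vector is isotropic: centered with covariance `n⁻¹ I`. -/
def Isotropic {Ω : Type} [MeasurableSpace Ω] (P : Measure Ω) {n : ℕ}
    (y : Ω → Fin n → ℝ) : Prop :=
  (∀ j, ∫ ω, y ω j ∂P = 0) ∧
  ∀ j k, ∫ ω, y ω j * y ω k ∂P = if j = k then (n : ℝ)⁻¹ else 0

/-- The distribution of a random vector is unconditional: invariant under sign flips of
coordinates. -/
def Unconditional {Ω : Type} [MeasurableSpace Ω] (P : Measure Ω) {n : ℕ}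
    (y : Ω → Fin n → ℝ) : Prop :=
  ∀ ε : Fin n → ℝ, (∀ j, ε j = 1 ∨ ε j = -1) →
    Measure.map (fun ω => fun j => ε j * y ω j) P = Measure.map y P

/-- The resolvent `G(z) = (M - z I)⁻¹` (as a complex matrix) of a real matrix. -/
def resolventM {n : ℕ} (M : Matrix (Fin n) (Fin n) ℝ) (z : ℂ) : Matrix (Fin n) (Fin n) ℂ :=
  (M.map (fun x => (x : ℂ)) - z • (1 : Matrix (Fin n) (Fin n) ℂ))⁻¹

/-- The random matrix `M = ∑_α τ_α y_α ⊗ y_α`. -/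
def sampleMatrix {n m : ℕ} (τ : Fin m → ℝ) (y : Fin m → Fin n → ℝ) :
    Matrix (Fin n) (Fin n) ℝ :=
  ∑ α, τ α • Matrix.vecMulVec (y α) (y α)

/-- Linear eigenvalue statistic `∑_j φ(λ_j)` of a (symmetric) real matrix. -/
def eigsStat {n : ℕ} (M : Matrix (Fin n) (Fin n) ℝ) (φ : ℝ → ℝ) : ℝ :=
  if h : M.IsHermitian then ∑ j, φ (h.eigenvalues j) else 0

/-- Normalized counting measure of eigenvalues of a (symmetric) real matrix evaluated
on a set. -/
def eigNCM {n : ℕ} (M : Matrix (Fin n) (Fin n) ℝ) (Δ : Set ℝ) : ℝ :=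
  if h : M.IsHermitian then (∑ j, Δ.indicator (fun _ => (1 : ℝ)) (h.eigenvalues j)) / n
  else 0

/-- Variance of a real random variable. -/
def rVar {Ω : Type} [MeasurableSpace Ω] (P : Measure Ω) (X : Ω → ℝ) : ℝ :=
  ∫ ω, (X ω - ∫ ω', X ω' ∂P) ^ 2 ∂P

/-- Variance `E |X - E X|²` of a complex random variable. -/
def cVar {Ω : Type} [MeasurableSpace Ω] (P : Measure Ω) (X : Ω → ℂ) : ℝ :=
  ∫ ω, ‖X ω - ∫ ω', X ω' ∂P‖ ^ 2 ∂P

/-- The Fourier transform `φ̂(k) = ∫ e^{ikx} φ(x) dx`. -/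
def fhat (φ : ℝ → ℝ) (k : ℝ) : ℂ := ∫ x : ℝ, Complex.exp (Complex.I * k * x) * φ x

/-- The squared norm `‖φ‖_s² = ∫ (1+2|k|)^{2s} |φ̂(k)|² dk` (with value in `ℝ≥0∞`). -/
def sobNormSq (s : ℝ) (φ : ℝ → ℝ) : ℝ≥0∞ :=
  ∫⁻ k : ℝ, ENNReal.ofReal ((1 + 2 * |k|) ^ (2 * s) * ‖fhat φ k‖ ^ 2)

open scoped ComplexConjugate

section Integrability

variable {Ω : Type*} [MeasurableSpace Ω] {μ : Measure Ω} {f g h k : Ω → ℝ}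

lemma abs_mul_mul_mul_le (a b c d : ℝ) : |a * b * c * d| ≤ (a ^ 4 + b ^ 4 + c ^ 4 + d ^ 4) / 4 := by
  have hab : |a * b * c * d| ≤ ((a * b) ^ 2 + (c * d) ^ 2) / 2 := by
    rw [show a * b * c * d = (a * b) * (c * d) by ring, abs_le]
    constructor <;> nlinarith [sq_nonneg (a * b + c * d), sq_nonneg (a * b - c * d)]
  nlinarith [sq_nonneg (a ^ 2 - b ^ 2), sq_nonneg (c ^ 2 - d ^ 2)]

lemma abs_mul_le_one_add_pow_four (a b : ℝ) : |a * b| ≤ 1 + a ^ 4 + b ^ 4 := by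
  rw [abs_le]
  constructor <;> nlinarith [sq_nonneg (a + b), sq_nonneg (a - b), sq_nonneg (a ^ 2 - 1),
    sq_nonneg (b ^ 2 - 1)]

theorem integrable_mul_mul_mul_of_pow_four (hf : AEStronglyMeasurable f μ)
    (hg : AEStronglyMeasurable g μ) (hh : AEStronglyMeasurable h μ)
    (hk : AEStronglyMeasurable k μ) (hf4 : Integrable (fun ω => f ω ^ 4) μ)
    (hg4 : Integrable (fun ω => g ω ^ 4) μ) (hh4 : Integrable (fun ω => h ω ^ 4) μ)
    (hk4 : Integrable (fun ω => k ω ^ 4) μ) :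
    Integrable (fun ω => f ω * g ω * h ω * k ω) μ :=
  ((((hf4.add hg4).add hh4).add hk4).div_const 4).mono' (((hf.mul hg).mul hh).mul hk)
    (ae_of_all _ fun _ => abs_mul_mul_mul_le _ _ _ _)

theorem integrable_mul_of_pow_four [IsFiniteMeasure μ] (hf : AEStronglyMeasurable f μ)
    (hg : AEStronglyMeasurable g μ) (hf4 : Integrable (fun ω => f ω ^ 4) μ)
    (hg4 : Integrable (fun ω => g ω ^ 4) μ) : Integrable (fun ω => f ω * g ω) μ :=
  (((integrable_const 1).add hf4).add hg4).mono' (hf.mul hg)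
    (ae_of_all _ fun _ => abs_mul_le_one_add_pow_four _ _)

end Integrability

lemma List.prod_map_ite_eq_pow_count {α M : Type*} [DecidableEq α] [Monoid M] (L : List α)
    (i : α) (a : M) : (L.map fun j => if j = i then a else 1).prod = a ^ L.count i := by
  induction L with
  | nil => simp
  | cons j L ih => by_cases h : j = i <;> simp [h, pow_succ', ih]

lemma List.exists_odd_count_of_not_paired {α : Type*} [DecidableEq α] {j k l m : α}
    (hjk : ¬(j = k ∧ l = m)) (hjl : ¬(j = l ∧ k = m)) (hjm : ¬(j = m ∧ k = l)) :
    ∃ i, Odd ([j, k, l, m].count i) := by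
  by_cases h1 : j = k <;> by_cases h2 : j = l <;> by_cases h3 : j = m <;>
    by_cases h4 : k = l <;> by_cases h5 : k = m <;> by_cases h6 : l = m <;>
    first
    | (refine ⟨j, ?_⟩; simp [Nat.odd_iff, eq_comm, *]; done)
    | (refine ⟨k, ?_⟩; simp [Nat.odd_iff, eq_comm, *]; done)
    | (refine ⟨l, ?_⟩; simp [Nat.odd_iff, eq_comm, *]; done)
    | (refine ⟨m, ?_⟩; simp [Nat.odd_iff, eq_comm, *]; done)
    | simp_all

def fourthMomentTensor {ι : Type*} [DecidableEq ι] (a κ : ℝ) (j k l m : ι) : ℝ :=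
  a * ((if j = k ∧ l = m then 1 else 0) + (if j = l ∧ k = m then 1 else 0)
    + (if j = m ∧ k = l then 1 else 0)) + κ * (if j = k ∧ k = l ∧ l = m then 1 else 0)

namespace Unconditional

variable {Ω : Type} [MeasurableSpace Ω] {P : Measure Ω} {n : ℕ} {y : Ω → Fin n → ℝ}

theorem integral_comp_signFlip (hu : Unconditional P y) (hy : Measurable y) {ε : Fin n → ℝ}
    (hε : ∀ j, ε j = 1 ∨ ε j = -1) {E : Type*} [NormedAddCommGroup E] [NormedSpace ℝ E]
    {g : (Fin n → ℝ) → E} (hg : AEStronglyMeasurable g (P.map y)) :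
    ∫ ω, g (fun j => ε j * y ω j) ∂P = ∫ ω, g (y ω) ∂P := by
  have hεy : Measurable fun ω j => ε j * y ω j :=
    measurable_pi_lambda _ fun j => measurable_const.mul hy.eval
  rw [← integral_map hεy.aemeasurable (hu ε hε ▸ hg), hu ε hε, integral_map hy.aemeasurable hg]

theorem integral_list_prod_eq_zero_of_odd_count (hu : Unconditional P y) (hy : Measurable y)
    {L : List (Fin n)} {i : Fin n} (hodd : Odd (L.count i)) :
    ∫ ω, (L.map (y ω)).prod ∂P = 0 := by
  set ε : Fin n → ℝ := fun j => if j = i then -1 else 1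
  have hε : ∀ j, ε j = 1 ∨ ε j = -1 := fun j => by by_cases h : j = i <;> simp [ε, h]
  have hflip : ∀ x : Fin n → ℝ, (L.map fun j => ε j * x j).prod = -(L.map x).prod := by
    intro x
    rw [List.prod_map_mul, List.prod_map_ite_eq_pow_count, hodd.neg_one_pow, neg_one_mul]
  have hg : Continuous fun x : Fin n → ℝ => (L.map x).prod :=
    continuous_list_prod L fun j _ => continuous_apply j
  have := hu.integral_comp_signFlip hy hε hg.aestronglyMeasurable
  simp only [hflip, integral_neg] at this
  linarith

theorem integral_mul_mul_mul_eq_fourthMomentTensor (hu : Unconditional P y) (hy : Measurable y)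
    {a22 κ4 : ℝ} (ha22 : ∀ j k, j ≠ k → ∫ ω, y ω j ^ 2 * y ω k ^ 2 ∂P = a22)
    (hκ4 : ∀ j, ∫ ω, y ω j ^ 4 ∂P = 3 * a22 + κ4) (j k l m : Fin n) :
    ∫ ω, y ω j * y ω k * y ω l * y ω m ∂P = fourthMomentTensor a22 κ4 j k l m := by
  by_cases hjk : j = k ∧ l = m
  · obtain ⟨rfl, rfl⟩ := hjk
    by_cases hjl : j = l
    · subst hjl
      calc ∫ ω, y ω j * y ω j * y ω j * y ω j ∂P = ∫ ω, y ω j ^ 4 ∂P := by congr with ω; ring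
        _ = _ := by simp [hκ4, fourthMomentTensor]; ring
    · calc ∫ ω, y ω j * y ω j * y ω l * y ω l ∂P = ∫ ω, y ω j ^ 2 * y ω l ^ 2 ∂P := by
            congr with ω; ring
        _ = _ := by simp [ha22 j l hjl, fourthMomentTensor, hjl]
  by_cases hjl : j = l ∧ k = m
  · obtain ⟨rfl, rfl⟩ := hjl
    have hjk' : j ≠ k := fun h => hjk ⟨h, h⟩
    calc ∫ ω, y ω j * y ω k * y ω j * y ω k ∂P = ∫ ω, y ω j ^ 2 * y ω k ^ 2 ∂P := by
          congr with ω; ring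
      _ = _ := by simp [ha22 j k hjk', fourthMomentTensor, hjk']
  by_cases hjm : j = m ∧ k = l
  · obtain ⟨rfl, rfl⟩ := hjm
    have hjk' : j ≠ k := fun h => hjl ⟨h, h.symm⟩
    calc ∫ ω, y ω j * y ω k * y ω k * y ω j ∂P = ∫ ω, y ω j ^ 2 * y ω k ^ 2 ∂P := by
          congr with ω; ring
      _ = _ := by simp [ha22 j k hjk', fourthMomentTensor, hjk', Ne.symm hjk']
  obtain ⟨i, hi⟩ := List.exists_odd_count_of_not_paired hjk hjl hjm
  have hjkl : ¬(j = k ∧ k = l ∧ l = m) := fun h => hjk ⟨h.1, h.2.2⟩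
  simpa [fourthMomentTensor, hjk, hjl, hjm, hjkl, mul_assoc] using
    hu.integral_list_prod_eq_zero_of_odd_count hy hi

end Unconditional

theorem Matrix.trace_mul_conjTranspose_eq_sum_norm_sq {m ι : Type*} [Fintype m] [Fintype ι]
    (A : Matrix m ι ℂ) : (A * Aᴴ).trace = ((∑ j, ∑ k, ‖A j k‖ ^ 2 : ℝ) : ℂ) := by
  push_cast
  simp [Matrix.trace, Matrix.mul_apply, Complex.mul_conj']

theorem sum_mul_conj_mul_fourthMomentTensor {ι : Type*} [Fintype ι] [DecidableEq ι]
    (A : Matrix ι ι ℂ) (hA : Aᵀ = A) (a κ : ℝ) :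
    ∑ j, ∑ k, ∑ l, ∑ m, A j k * conj (A l m) * (fourthMomentTensor a κ j k l m : ℂ) =
      ((a * ‖A.trace‖ ^ 2 + 2 * a * ∑ j, ∑ k, ‖A j k‖ ^ 2 + κ * ∑ j, ‖A j j‖ ^ 2 : ℝ) : ℂ) := by
  have hsymm : ∀ j k, A k j = A j k := fun j k => congrFun (congrFun hA j) k
  simp only [fourthMomentTensor, ite_and, mul_add, mul_ite, mul_one, mul_zero, Complex.ofReal_add,
    apply_ite Complex.ofReal, Complex.ofReal_zero, Finset.sum_add_distrib, Finset.sum_ite_irrel,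
    Finset.sum_ite_eq, Finset.mem_univ, ↓reduceIte, Finset.sum_const_zero, hsymm, trace,
    diag_apply, Finset.mul_sum, Complex.ofReal_mul, Complex.ofReal_pow, Complex.ofReal_sum,
    Complex.ofReal_ofNat]
  simp only [← Finset.sum_mul, ← Finset.mul_sum, ← map_sum, Complex.mul_conj']
  ring

section QuadraticForm

variable {Ω : Type*} [MeasurableSpace Ω] {μ : Measure Ω} {n : ℕ}
  (A : Matrix (Fin n) (Fin n) ℂ) {y : Ω → Fin n → ℝ}

theorem quadForm_eq_sum_mul_ofReal (x : Fin n → ℝ) :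
    quadForm A x = ∑ j, ∑ k, A j k * ((x j * x k : ℝ) : ℂ) := by
  simp only [quadForm, Complex.ofReal_mul, mul_assoc]

theorem quadForm_mul_conj (x : Fin n → ℝ) :
    quadForm A x * conj (quadForm A x) =
      ∑ j, ∑ k, ∑ l, ∑ m, A j k * conj (A l m) * ((x j * x k * x l * x m : ℝ) : ℂ) := by
  rw [mul_comm]
  simp only [quadForm, map_sum, map_mul, Complex.conj_ofReal, Finset.sum_mul, Finset.mul_sum]
  refine Fintype.sum_congr _ _ fun j => Fintype.sum_congr _ _ fun k =>
    Fintype.sum_congr _ _ fun l => Fintype.sum_congr _ _ fun m => ?_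
  push_cast
  ring

theorem integrable_quadForm (hy : ∀ j k, Integrable (fun ω => y ω j * y ω k) μ) :
    Integrable (fun ω => quadForm A (y ω)) μ := by
  have hy' : ∀ j k, Integrable (fun ω => ((y ω j * y ω k : ℝ) : ℂ)) μ := fun j k => (hy j k).ofReal
  simp only [quadForm_eq_sum_mul_ofReal]
  fun_prop

theorem integral_quadForm (hy : ∀ j k, Integrable (fun ω => y ω j * y ω k) μ) :
    ∫ ω, quadForm A (y ω) ∂μ = ∑ j, ∑ k, A j k * ((∫ ω, y ω j * y ω k ∂μ : ℝ) : ℂ) := by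
  have hy' : ∀ j k, Integrable (fun ω => ((y ω j * y ω k : ℝ) : ℂ)) μ := fun j k => (hy j k).ofReal
  simp only [quadForm_eq_sum_mul_ofReal]
  simp (disch := (intro _ _; fun_prop)) only [integral_finsetSum, integral_const_mul,
    integral_complex_ofReal]

theorem integrable_norm_quadForm_sq
    (hy : ∀ j k l m, Integrable (fun ω => y ω j * y ω k * y ω l * y ω m) μ) :
    Integrable (fun ω => ‖quadForm A (y ω)‖ ^ 2) μ := by
  have hy' : ∀ j k l m, Integrable (fun ω => ((y ω j * y ω k * y ω l * y ω m : ℝ) : ℂ)) μ :=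
    fun j k l m => (hy j k l m).ofReal
  have h : Integrable (fun ω => quadForm A (y ω) * conj (quadForm A (y ω))) μ := by
    simp only [quadForm_mul_conj]
    fun_prop
  refine h.norm.congr (ae_of_all _ fun ω => ?_)
  simp [sq]

theorem integral_norm_quadForm_sq
    (hy : ∀ j k l m, Integrable (fun ω => y ω j * y ω k * y ω l * y ω m) μ) :
    ((∫ ω, ‖quadForm A (y ω)‖ ^ 2 ∂μ : ℝ) : ℂ) = ∑ j, ∑ k, ∑ l, ∑ m,
      A j k * conj (A l m) * ((∫ ω, y ω j * y ω k * y ω l * y ω m ∂μ : ℝ) : ℂ) := by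
  have hy' : ∀ j k l m, Integrable (fun ω => ((y ω j * y ω k * y ω l * y ω m : ℝ) : ℂ)) μ :=
    fun j k l m => (hy j k l m).ofReal
  rw [← integral_complex_ofReal]
  push_cast
  simp only [← Complex.mul_conj', quadForm_mul_conj]
  simp (disch := (intro _ _; fun_prop)) only [integral_finsetSum, integral_const_mul,
    integral_complex_ofReal]

end QuadraticForm

theorem integral_norm_sub_integral_sq {Ω E : Type*} [MeasurableSpace Ω] {μ : Measure Ω}
    [IsProbabilityMeasure μ] [NormedAddCommGroup E] [InnerProductSpace ℝ E] [CompleteSpace E]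
    {X : Ω → E} (hX : Integrable X μ) (hX2 : Integrable (fun ω => ‖X ω‖ ^ 2) μ) :
    ∫ ω, ‖X ω - ∫ ω', X ω' ∂μ‖ ^ 2 ∂μ = ∫ ω, ‖X ω‖ ^ 2 ∂μ - ‖∫ ω, X ω ∂μ‖ ^ 2 := by
  set c := ∫ ω, X ω ∂μ
  have hcross : Integrable (fun ω => 2 * inner ℝ c (X ω)) μ := (hX.const_inner c).const_mul 2
  calc ∫ ω, ‖X ω - c‖ ^ 2 ∂μ = ∫ ω, ‖X ω‖ ^ 2 - 2 * inner ℝ c (X ω) + ‖c‖ ^ 2 ∂μ := by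
        simp only [norm_sub_sq_real, real_inner_comm]
    _ = ∫ ω, ‖X ω‖ ^ 2 ∂μ - 2 * inner ℝ c c + ‖c‖ ^ 2 := by
        rw [integral_add (by exact hX2.sub hcross) (integrable_const _), integral_sub hX2 hcross,
          integral_const_mul, integral_inner hX, integral_const, probReal_univ, one_smul]
    _ = ∫ ω, ‖X ω‖ ^ 2 ∂μ - ‖c‖ ^ 2 := by rw [real_inner_self_eq_norm_sq]; ring

/-- variance of a quadratic form of an isotropic unconditional vector. -/
theorem variance_quadratic_form {Ω : Type} [MeasurableSpace Ω] (P : Measure Ω)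
    [IsProbabilityMeasure P] {n : ℕ} (y : Ω → Fin n → ℝ)
    (hmeas : Measurable y)
    (hint : ∀ j, Integrable (fun ω => (y ω j) ^ 4) P)
    (hiso : Isotropic P y)
    (huncond : Unconditional P y)
    (a22 κ4 : ℝ)
    (ha22 : ∀ j k : Fin n, j ≠ k → ∫ ω, (y ω j) ^ 2 * (y ω k) ^ 2 ∂P = a22)
    (hκ4 : ∀ j : Fin n, ∫ ω, (y ω j) ^ 4 ∂P = 3 * a22 + κ4)
    (A : Matrix (Fin n) (Fin n) ℂ) (hA : Aᵀ = A) :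
    cVar P (fun ω => quadForm A (y ω)) =
      (a22 - ((n : ℝ)⁻¹) ^ 2) * ‖A.trace‖ ^ 2
        + 2 * a22 * ((A * A.conjTranspose).trace).re
        + κ4 * ∑ j, ‖A j j‖ ^ 2 := by
  obtain ⟨-, hcov⟩ := hiso
  have hy : ∀ j, AEStronglyMeasurable (fun ω => y ω j) P := fun j =>
    hmeas.eval.aestronglyMeasurable
  have hy2 : ∀ j k, Integrable (fun ω => y ω j * y ω k) P := fun j k =>
    integrable_mul_of_pow_four (hy j) (hy k) (hint j) (hint k)
  have hy4 : ∀ j k l m, Integrable (fun ω => y ω j * y ω k * y ω l * y ω m) P :=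
    fun j k l m => integrable_mul_mul_mul_of_pow_four (hy j) (hy k) (hy l) (hy m)
      (hint j) (hint k) (hint l) (hint m)
  have hmean : ∫ ω, quadForm A (y ω) ∂P = ((n : ℝ)⁻¹ : ℂ) * A.trace := by
    simp [integral_quadForm A hy2, hcov, apply_ite Complex.ofReal, Matrix.trace, Finset.mul_sum,
      mul_comm]
  have hsq : ∫ ω, ‖quadForm A (y ω)‖ ^ 2 ∂P =
      a22 * ‖A.trace‖ ^ 2 + 2 * a22 * ∑ j, ∑ k, ‖A j k‖ ^ 2 + κ4 * ∑ j, ‖A j j‖ ^ 2 := by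
    apply Complex.ofReal_injective
    simp only [integral_norm_quadForm_sq A hy4,
      huncond.integral_mul_mul_mul_eq_fourthMomentTensor hmeas ha22 hκ4]
    exact sum_mul_conj_mul_fourthMomentTensor A hA a22 κ4
  have htrace : ((A * Aᴴ).trace).re = ∑ j, ∑ k, ‖A j k‖ ^ 2 := by
    rw [Matrix.trace_mul_conjTranspose_eq_sum_norm_sq, Complex.ofReal_re]
  rw [cVar, integral_norm_sub_integral_sq (integrable_quadForm A hy2)
    (integrable_norm_quadForm_sq A hy4), hsq, hmean, htrace, norm_mul]
  simp only [Complex.ofReal_natCast, norm_inv, RCLike.norm_natCast, inv_pow]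
  ring
end
end

section
/- Let M⁰ be an n×n real symmetric matrix, y ∈ ℝ^n, τ ∈ ℝ, z ∈ ℂ with Im z ≠ 0, and G⁰ = (M⁰ − zI)^{-1}. Then | τ ((G⁰)² y, y) / (1 + τ (G⁰ y, y)) | ≤ 1/|Im z|. In particular, if M = M⁰ + τ y⊗y and G = (M−zI)^{-1}, then |Tr G − Tr G⁰| ≤ 1/|Im z|. -/
open MeasureTheory ProbabilityTheory Filter Topology Matrix Asymptotics
open scoped BigOperators ENNReal NNReal Pointwise

noncomputable section

/-! Write `G⁰ = (M⁰ - z)⁻¹` and `w = G⁰ y`. As `M⁰` is real symmetric, `G⁰` is symmetric, so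
`((G⁰)² y, y) = w ⬝ᵥ w` has modulus at most `‖w‖²`; as `M⁰` is Hermitian,
`Im (G⁰ y, y) = Im z ‖w‖²`. Taking imaginary parts,
`|1 + τ (G⁰ y, y)| ≥ |τ| |Im z| ‖w‖² ≥ |Im z| |τ ((G⁰)² y, y)|`.
By the Sherman–Morrison formula `G = G⁰ - τ / (1 + τ (G⁰ y, y)) • (G⁰ y) ⊗ (G⁰ y)`, and the trace
of the correction is exactly the quotient just bounded. -/

namespace Matrix

variable {ι : Type*}

theorem IsHermitian.map_ofReal {M : Matrix ι ι ℝ} (hM : M.IsHermitian) :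
    (M.map Complex.ofReal).IsHermitian :=
  hM.map _ fun x => by simp

variable [Fintype ι]

theorem star_dotProduct_self_eq_sum_norm_sq (w : ι → ℂ) :
    star w ⬝ᵥ w = ((∑ j, ‖w j‖ ^ 2 : ℝ) : ℂ) := by
  simp [dotProduct, Complex.conj_mul']

theorem norm_dotProduct_self_le (w : ι → ℂ) :
    ‖w ⬝ᵥ w‖ ≤ ∑ j, ‖w j‖ ^ 2 :=
  (norm_sum_le _ _).trans_eq (by simp [sq])

variable [DecidableEq ι]

theorem IsHermitian.isUnit_det_sub_smul_one {A : Matrix ι ι ℂ} (hA : A.IsHermitian) {z : ℂ}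
    (hz : z.im ≠ 0) : IsUnit (A - z • 1).det := by
  have hσ : z ∉ spectrum ℂ A := by
    rw [hA.spectrum_eq_image_range]
    rintro ⟨t, -, rfl⟩
    exact hz (Complex.ofReal_im t)
  rw [spectrum.notMem_iff, Algebra.algebraMap_eq_smul_one] at hσ
  rw [← isUnit_iff_isUnit_det, ← neg_sub]
  exact hσ.neg

theorem IsHermitian.im_star_sub_smul_one_mulVec_dotProduct {A : Matrix ι ι ℂ}
    (hA : A.IsHermitian) (z : ℂ) (w : ι → ℂ) :
    (star ((A - z • 1) *ᵥ w) ⬝ᵥ w).im = z.im * ∑ j, ‖w j‖ ^ 2 := by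
  have hAz : (A - z • 1)ᴴ = A - star z • 1 := by
    rw [conjTranspose_sub, hA.eq, conjTranspose_smul, conjTranspose_one]
  have hA : (star w ⬝ᵥ A *ᵥ w).im = 0 := hA.im_star_dotProduct_mulVec_self w
  rw [star_mulVec, ← dotProduct_mulVec, hAz, sub_mulVec, smul_mulVec, one_mulVec,
    dotProduct_sub, dotProduct_smul, smul_eq_mul, Complex.sub_im, hA,
    star_dotProduct_self_eq_sum_norm_sq, Complex.mul_im, Complex.ofReal_re, Complex.ofReal_im,
    Complex.star_def, Complex.conj_im]
  ring

theorem IsHermitian.isUnit_det_map_ofReal_sub_smul_one {M : Matrix ι ι ℝ} (hM : M.IsHermitian)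
    {z : ℂ} (hz : z.im ≠ 0) : IsUnit (M.map Complex.ofReal - z • 1).det :=
  hM.map_ofReal.isUnit_det_sub_smul_one hz

-- Sherman–Morrison formula
theorem inv_add_smul_vecMulVec {K : Type*} [Field K] {B : Matrix ι ι K} (hB : IsUnit B.det)
    (τ : K) (u v : ι → K) (h : 1 + τ * (v ⬝ᵥ (B⁻¹ *ᵥ u)) ≠ 0) :
    (B + τ • vecMulVec u v)⁻¹ =
      B⁻¹ - (τ / (1 + τ * (v ⬝ᵥ (B⁻¹ *ᵥ u)))) • vecMulVec (B⁻¹ *ᵥ u) (v ᵥ* B⁻¹) := by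
  set S := v ⬝ᵥ (B⁻¹ *ᵥ u)
  set c := τ / (1 + τ * S)
  have hc : c * (1 + τ * S) = τ := div_mul_cancel₀ τ h
  have h₁ : B * vecMulVec (B⁻¹ *ᵥ u) (v ᵥ* B⁻¹) = vecMulVec u (v ᵥ* B⁻¹) := by
    rw [mul_vecMulVec, mulVec_mulVec, mul_nonsing_inv B hB, one_mulVec]
  have h₂ : vecMulVec u v * vecMulVec (B⁻¹ *ᵥ u) (v ᵥ* B⁻¹) = S • vecMulVec u (v ᵥ* B⁻¹) := by
    rw [vecMulVec_mul_vecMulVec, vecMulVec_smul]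
  refine inv_eq_right_inv ?_
  calc (B + τ • vecMulVec u v) * (B⁻¹ - c • vecMulVec (B⁻¹ *ᵥ u) (v ᵥ* B⁻¹))
      = 1 + (τ - c * (1 + τ * S)) • vecMulVec u (v ᵥ* B⁻¹) := by
        rw [add_mul, mul_sub, mul_sub, Matrix.mul_smul, h₁, mul_nonsing_inv B hB,
          Matrix.smul_mul, Matrix.smul_mul, Matrix.mul_smul, h₂, vecMulVec_mul]
        module
    _ = 1 := by rw [hc, sub_self, zero_smul, add_zero]

end Matrix

section Resolvent

variable {n : ℕ} {M : Matrix (Fin n) (Fin n) ℝ} {z : ℂ}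

theorem quadForm_eq_dotProduct (A : Matrix (Fin n) (Fin n) ℂ) (y : Fin n → ℝ) :
    quadForm A y = (Complex.ofReal ∘ y) ⬝ᵥ (A *ᵥ (Complex.ofReal ∘ y)) := by
  simp only [quadForm, dotProduct, mulVec, Finset.mul_sum, Function.comp_apply]
  exact Finset.sum_congr rfl fun j _ => Finset.sum_congr rfl fun k _ => by ring

theorem transpose_resolventM (hM : M.IsHermitian) : (resolventM M z)ᵀ = resolventM M z := by
  have hMT : Mᵀ = M := by rw [← conjTranspose_eq_transpose_of_trivial]; exact hM.eq
  rw [resolventM, transpose_nonsing_inv, transpose_sub, ← transpose_map, hMT, transpose_smul,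
    transpose_one]

theorem map_ofReal_sub_smul_one_mulVec_resolventM (hM : M.IsHermitian) (hz : z.im ≠ 0)
    (v : Fin n → ℂ) : (M.map Complex.ofReal - z • 1) *ᵥ (resolventM M z *ᵥ v) = v := by
  rw [mulVec_mulVec, resolventM, mul_nonsing_inv _ (hM.isUnit_det_map_ofReal_sub_smul_one hz),
    one_mulVec]

theorem im_quadForm_resolventM (hM : M.IsHermitian) (hz : z.im ≠ 0) (y : Fin n → ℝ) :
    (quadForm (resolventM M z) y).im =
      z.im * ∑ j, ‖(resolventM M z *ᵥ (Complex.ofReal ∘ y)) j‖ ^ 2 := by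
  have hy : Complex.ofReal ∘ y = star (Complex.ofReal ∘ y) := by
    ext j
    simp
  rw [← hM.map_ofReal.im_star_sub_smul_one_mulVec_dotProduct,
    map_ofReal_sub_smul_one_mulVec_resolventM hM hz, ← hy, quadForm_eq_dotProduct]

theorem quadForm_resolventM_mul_self (hM : M.IsHermitian) (y : Fin n → ℝ) :
    quadForm (resolventM M z * resolventM M z) y =
      (resolventM M z *ᵥ (Complex.ofReal ∘ y)) ⬝ᵥ (resolventM M z *ᵥ (Complex.ofReal ∘ y)) := by
  rw [quadForm_eq_dotProduct, ← mulVec_mulVec, dotProduct_mulVec, ← transpose_resolventM hM,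
    vecMul_transpose, transpose_resolventM hM]

theorem norm_mul_quadForm_resolventM_sq_div_le (hM : M.IsHermitian) (hz : z.im ≠ 0)
    (y : Fin n → ℝ) (τ : ℝ) :
    ‖(τ : ℂ) * quadForm (resolventM M z * resolventM M z) y /
        (1 + (τ : ℂ) * quadForm (resolventM M z) y)‖ ≤ 1 / |z.im| := by
  set s := ∑ j, ‖(resolventM M z *ᵥ (Complex.ofReal ∘ y)) j‖ ^ 2
  have hnum : ‖(τ : ℂ) * quadForm (resolventM M z * resolventM M z) y‖ ≤ |τ| * s := by
    rw [norm_mul, Complex.norm_real, Real.norm_eq_abs, quadForm_resolventM_mul_self hM]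
    gcongr
    exact norm_dotProduct_self_le _
  have hden : |τ| * s * |z.im| ≤ ‖1 + (τ : ℂ) * quadForm (resolventM M z) y‖ :=
    calc |τ| * s * |z.im| = |(1 + (τ : ℂ) * quadForm (resolventM M z) y).im| := by
          rw [Complex.add_im, Complex.one_im, zero_add, Complex.im_ofReal_mul,
            im_quadForm_resolventM hM hz, abs_mul, abs_mul,
            abs_of_nonneg (show 0 ≤ s by positivity)]
          ring
      _ ≤ _ := Complex.abs_im_le_norm _
  have hz' : 0 < |z.im| := abs_pos.2 hz
  rw [norm_div]
  refine div_le_of_le_mul₀ (norm_nonneg _) (by positivity) ?_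
  rw [one_div_mul_eq_div, le_div_iff₀ hz']
  exact (mul_le_mul_of_nonneg_right hnum hz'.le).trans hden

open scoped ComplexOrder in
theorem one_add_mul_quadForm_resolventM_ne_zero (hM : M.IsHermitian) (hz : z.im ≠ 0)
    (y : Fin n → ℝ) (τ : ℝ) : 1 + (τ : ℂ) * quadForm (resolventM M z) y ≠ 0 := by
  intro h
  have him := congrArg Complex.im h
  rw [Complex.add_im, Complex.one_im, zero_add, Complex.im_ofReal_mul,
    im_quadForm_resolventM hM hz, Complex.zero_im, mul_eq_zero, mul_eq_zero] at him
  rcases him with hτ | hz0 | hs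
  · simp [hτ] at h
  · exact hz hz0
  · have hw : resolventM M z *ᵥ (Complex.ofReal ∘ y) = 0 := by
      rw [← dotProduct_star_self_eq_zero, star_dotProduct_self_eq_sum_norm_sq, hs,
        Complex.ofReal_zero]
    simp [quadForm_eq_dotProduct, hw] at h

theorem resolventM_add_smul_vecMulVec (hM : M.IsHermitian) (hz : z.im ≠ 0) (y : Fin n → ℝ)
    (τ : ℝ) :
    resolventM (M + τ • vecMulVec y y) z =
      resolventM M z - ((τ : ℂ) / (1 + τ * quadForm (resolventM M z) y)) •
        vecMulVec (resolventM M z *ᵥ (Complex.ofReal ∘ y))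
          ((Complex.ofReal ∘ y) ᵥ* resolventM M z) := by
  have hmap : (M + τ • vecMulVec y y).map Complex.ofReal - z • 1 =
      (M.map Complex.ofReal - z • 1) +
        (τ : ℂ) • vecMulVec (Complex.ofReal ∘ y) (Complex.ofReal ∘ y) := by
    ext i j
    simp only [map_apply, Matrix.add_apply, Matrix.sub_apply, Matrix.smul_apply,
      vecMulVec_apply, smul_eq_mul, Function.comp_apply]
    push_cast
    ring
  have hden := one_add_mul_quadForm_resolventM_ne_zero hM hz y τ
  rw [quadForm_eq_dotProduct] at hden ⊢
  rw [resolventM, hmap]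
  exact inv_add_smul_vecMulVec (hM.isUnit_det_map_ofReal_sub_smul_one hz) _ _ _ hden

theorem trace_resolventM_add_smul_vecMulVec_sub (hM : M.IsHermitian) (hz : z.im ≠ 0)
    (y : Fin n → ℝ) (τ : ℝ) :
    (resolventM (M + τ • vecMulVec y y) z).trace - (resolventM M z).trace =
      -((τ : ℂ) * quadForm (resolventM M z * resolventM M z) y /
        (1 + τ * quadForm (resolventM M z) y)) := by
  rw [resolventM_add_smul_vecMulVec hM hz, trace_sub, trace_smul, trace_vecMulVec,
    dotProduct_comm, ← dotProduct_mulVec, mulVec_mulVec, ← quadForm_eq_dotProduct, smul_eq_mul,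
    sub_sub_cancel_left, div_mul_eq_mul_div]

end Resolvent

/-- the trace increment of a rank-one perturbation is bounded by `1/|Im z|`. -/
theorem trace_increment_bound {n : ℕ} (M0 : Matrix (Fin n) (Fin n) ℝ)
    (hM0 : M0.IsHermitian) (y : Fin n → ℝ) (τ : ℝ) (z : ℂ) (hz : z.im ≠ 0) :
    ‖(τ : ℂ) * quadForm (resolventM M0 z * resolventM M0 z) y /
        (1 + (τ : ℂ) * quadForm (resolventM M0 z) y)‖ ≤ 1 / |z.im| ∧
    ‖(resolventM (M0 + τ • Matrix.vecMulVec y y) z).trace -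
        (resolventM M0 z).trace‖ ≤ 1 / |z.im| := by
  have hbound := norm_mul_quadForm_resolventM_sq_div_le hM0 hz y τ
  refine ⟨hbound, ?_⟩
  rwa [trace_resolventM_add_smul_vecMulVec_sub hM0 hz, norm_neg]
end
end
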